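/- arXiv:2501.01623 — 2 statements merged into one kernel-verified Lean document; each statement's English description precedes it below -/
import Mathlib

section
/- Under Independence, Monotonicity, Relevance, Wave ignorability, and absorbing treatment, the wave-specific reduced forms satisfy the lower-triangular linear system ρ_w = Σ_{t=1}^{w} λ_t · π_{w,t} for every wave w ∈ {1,...,w̄}. -/
open MeasureTheory ProbabilityTheory Finset

noncomputable def cmean {Ω : Type*} [MeasurableSpace Ω] (P : MeasureTheory.Measure Ω)
    (A : Set Ω) (X : Ω → ℝ) : ℝ :=
  ∫ ω, X ω ∂(P[|A])

lemma cmean_eq {Ω : Type*} [MeasurableSpace Ω] (P : MeasureTheory.Measure Ω)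
    (A : Set Ω) (X : Ω → ℝ) :
    cmean P A X = (P A).toReal⁻¹ * ∫ ω in A, X ω ∂P := by
  unfold cmean
  rw [ProbabilityTheory.cond, integral_smul_measure, smul_eq_mul, ENNReal.toReal_inv]

lemma tele (f : ℕ → ℝ) : ∀ b a : ℕ, a ≤ b →
    ∑ t ∈ Finset.Ioc a b, (f t - f (t - 1)) = f b - f a := by
  intro b
  induction b with
  | zero => intro a ha; interval_cases a; simp
  | succ b ih =>
    intro a ha
    rcases Nat.lt_or_ge a (b + 1) with h | h
    · have hab : a ≤ b := Nat.lt_succ_iff.mp h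
      rw [Finset.sum_Ioc_succ_top hab, ih a hab]
      simp only [Nat.add_sub_cancel]
      ring
    · have : a = b + 1 := le_antisymm ha h
      subst this
      simp

theorem reduced_form_linear_system
    {Ω : Type*} [MeasurableSpace Ω] (P : MeasureTheory.Measure Ω) [IsProbabilityMeasure P]
    (Z : Ω → ℕ) (hZmeas : Measurable Z) (hZbin : ∀ ω, Z ω ≤ 1)
    (hZpos : 0 < P {ω | Z ω = 1}) (hZlt : P {ω | Z ω = 1} < 1)
    (wbar : ℕ) (hwbar : 1 ≤ wbar)
    (T : ℕ → ℕ → Ω → ℕ) (hTmeas : ∀ w z, Measurable (T w z))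
    (hTrange : ∀ w ∈ Set.Icc 1 wbar, ∀ z ≤ 1, ∀ ω, T w z ω ≤ w)
    (Y : ℕ → ℕ → Ω → ℝ) (hYmeas : ∀ w t, Measurable (Y w t))
    (hYint : ∀ w ∈ Set.Icc 1 wbar, ∀ t ≤ w, MeasureTheory.Integrable (Y w t) P)
    (hAbs : ∀ z ≤ 1, ∀ w, 1 ≤ w → w < wbar → ∀ ω,
      (1 ≤ T w z ω → T (w + 1) z ω = T w z ω + 1) ∧
      (T w z ω = 0 → T (w + 1) z ω ≤ 1))
    (hIndep : ∀ w ∈ Set.Icc 1 wbar,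
      IndepFun (fun ω => ((fun t : ℕ => Y w t ω), T w 1 ω, T w 0 ω)) Z P)
    (hMono : ∀ w ∈ Set.Icc 1 wbar, ∀ᵐ ω ∂P, T w 0 ω ≤ T w 1 ω)
    (hRel : cmean P {ω | Z ω = 0} (fun ω => (T 1 (Z ω) ω : ℝ))
          < cmean P {ω | Z ω = 1} (fun ω => (T 1 (Z ω) ω : ℝ)))
    (lam : ℕ → ℝ)
    (hWI : ∀ v w t, 1 ≤ t → t ≤ v → v ≤ w → w ≤ wbar →
      0 < P {ω | T w 0 ω < t ∧ t ≤ T w 1 ω} →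
      0 < P {ω | T v 0 ω < t ∧ t ≤ T v 1 ω} →
      cmean P {ω | T w 0 ω < t ∧ t ≤ T w 1 ω} (fun ω => Y w t ω - Y w (t - 1) ω) = lam t ∧
      cmean P {ω | T v 0 ω < t ∧ t ≤ T v 1 ω} (fun ω => Y v t ω - Y v (t - 1) ω) = lam t) :
    ∀ w ∈ Set.Icc 1 wbar,
      cmean P {ω | Z ω = 1} (fun ω => Y w (T w (Z ω) ω) ω)
        - cmean P {ω | Z ω = 0} (fun ω => Y w (T w (Z ω) ω) ω)
      = ∑ t ∈ Finset.Icc 1 w, lam t * (P {ω | T w 0 ω < t ∧ t ≤ T w 1 ω}).toReal := by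
  intro w hw
  obtain ⟨hw1, hwb⟩ := hw
  have hA1m : MeasurableSet {ω | Z ω = 1} := hZmeas (measurableSet_singleton 1)
  -- positivity of P {Z = z} for z ≤ 1
  have hPz : ∀ z : ℕ, z ≤ 1 → P {ω | Z ω = z} ≠ 0 := by
    intro z hz
    interval_cases z
    · have hc : {ω | Z ω = 0} = {ω | Z ω = 1}ᶜ := by
        ext ω; have := hZbin ω; simp only [Set.mem_setOf_eq, Set.mem_compl_iff]; omega
      rw [hc, prob_compl_eq_one_sub hA1m]
      intro h
      exact absurd (tsub_eq_zero_iff_le.mp h) (not_le.mpr hZlt)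
    · exact hZpos.ne'
  -- integrability of ω ↦ Y w (T w z ω) ω
  have hintz : ∀ z : ℕ, z ≤ 1 → Integrable (fun ω => Y w (T w z ω) ω) P := by
    intro z hz
    have hTle : ∀ ω, T w z ω ≤ w := hTrange w ⟨hw1, hwb⟩ z hz
    have heq : (fun ω => Y w (T w z ω) ω) =
        fun ω => ∑ t ∈ Finset.range (w + 1), Set.indicator {ω' | T w z ω' = t} (Y w t) ω := by
      funext ω
      simp [Set.indicator_apply, Finset.sum_ite_eq, Nat.lt_succ_iff, hTle ω]
    rw [heq]
    apply integrable_finset_sum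
    intro t ht
    exact (hYint w ⟨hw1, hwb⟩ t (Nat.lt_succ_iff.mp (Finset.mem_range.mp ht))).indicator
      ((hTmeas w z) (measurableSet_singleton t))
  -- key identity: conditional means equal unconditional means of potential outcomes
  have key : ∀ z : ℕ, z ≤ 1 →
      cmean P {ω | Z ω = z} (fun ω => Y w (T w (Z ω) ω) ω) = ∫ ω, Y w (T w z ω) ω ∂P := by
    intro z hz
    have hAm : MeasurableSet {ω | Z ω = z} := hZmeas (measurableSet_singleton z)
    have hTle : ∀ ω, T w z ω ≤ w := hTrange w ⟨hw1, hwb⟩ z hz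
    set g : ((ℕ → ℝ) × ℕ × ℕ) → ℝ :=
      fun p => ∑ t ∈ Finset.range (w + 1),
        if (if z = 1 then p.2.1 else p.2.2) = t then p.1 t else 0 with hgdef
    have hsel : Measurable (fun p : (ℕ → ℝ) × ℕ × ℕ => if z = 1 then p.2.1 else p.2.2) := by
      split_ifs
      · exact measurable_fst.comp measurable_snd
      · exact measurable_snd.comp measurable_snd
    have hgmeas : Measurable g := by
      apply Finset.measurable_sum
      intro t _
      exact Measurable.ite (hsel (measurableSet_singleton t))
        ((measurable_pi_apply t).comp measurable_fst) measurable_const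
    have hgV : ∀ ω, g ((fun t : ℕ => Y w t ω), T w 1 ω, T w 0 ω) = Y w (T w z ω) ω := by
      intro ω
      have h1 : (if z = 1 then T w 1 ω else T w 0 ω) = T w z ω := by
        interval_cases z <;> simp
      simp [hgdef, h1, Finset.sum_ite_eq, Nat.lt_succ_iff, hTle ω]
    set ψ : ℕ → ℝ := fun n => if n = z then 1 else 0 with hψdef
    have hcomp := (hIndep w ⟨hw1, hwb⟩).comp hgmeas (measurable_from_top (f := ψ))
    have hintg : Integrable (fun ω => g ((fun t : ℕ => Y w t ω), T w 1 ω, T w 0 ω)) P :=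
      (hintz z hz).congr (Filter.Eventually.of_forall fun ω => (hgV ω).symm)
    have hψind : (fun ω => ψ (Z ω)) = Set.indicator {ω | Z ω = z} (fun _ => (1 : ℝ)) := by
      funext ω; simp [hψdef, Set.indicator_apply]
    have hintψ : Integrable (fun ω => ψ (Z ω)) P := by
      rw [hψind]; exact (integrable_const 1).indicator hAm
    have hψint : ∫ ω, ψ (Z ω) ∂P = (P {ω | Z ω = z}).toReal := by
      rw [hψind, integral_indicator_const _ hAm, smul_eq_mul, mul_one]
      rfl
    have hmul : (∫ ω, g ((fun t : ℕ => Y w t ω), T w 1 ω, T w 0 ω) * ψ (Z ω) ∂P)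
        = (∫ ω, g ((fun t : ℕ => Y w t ω), T w 1 ω, T w 0 ω) ∂P) * ∫ ω, ψ (Z ω) ∂P :=
      hcomp.integral_fun_mul_eq_mul_integral hintg.aestronglyMeasurable hintψ.aestronglyMeasurable
    have hprod : ∀ ω, Set.indicator {ω | Z ω = z} (fun ω => Y w (T w z ω) ω) ω
        = g ((fun t : ℕ => Y w t ω), T w 1 ω, T w 0 ω) * ψ (Z ω) := by
      intro ω
      simp only [hgV ω, hψdef, Set.indicator_apply, Set.mem_setOf_eq]
      split_ifs <;> simp
    rw [cmean_eq]
    have hset : ∫ ω in {ω | Z ω = z}, Y w (T w (Z ω) ω) ω ∂P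
        = ∫ ω in {ω | Z ω = z}, Y w (T w z ω) ω ∂P := by
      apply setIntegral_congr_fun hAm
      intro ω hω
      simp only [Set.mem_setOf_eq] at hω
      simp only [hω]
    rw [hset, ← integral_indicator hAm,
      integral_congr_ae (Filter.Eventually.of_forall hprod), hmul, hψint,
      integral_congr_ae (Filter.Eventually.of_forall hgV)]
    have hne : (P {ω | Z ω = z}).toReal ≠ 0 :=
      ENNReal.toReal_ne_zero.mpr ⟨hPz z hz, measure_ne_top P _⟩
    field_simp
  rw [key 1 le_rfl, key 0 (by norm_num),
    ← integral_sub (hintz 1 le_rfl) (hintz 0 (by norm_num))]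
  -- telescoping, a.e.
  have hterm_int : ∀ t ∈ Finset.Icc 1 w,
      Integrable (fun ω => if T w 0 ω < t ∧ t ≤ T w 1 ω then Y w t ω - Y w (t - 1) ω else 0) P := by
    intro t ht
    obtain ⟨ht1, htw⟩ := Finset.mem_Icc.mp ht
    have heq : (fun ω => if T w 0 ω < t ∧ t ≤ T w 1 ω then Y w t ω - Y w (t - 1) ω else 0)
        = Set.indicator {ω | T w 0 ω < t ∧ t ≤ T w 1 ω}
            (fun ω => Y w t ω - Y w (t - 1) ω) := by
      funext ω; simp [Set.indicator_apply]
    rw [heq]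
    exact ((hYint w ⟨hw1, hwb⟩ t htw).sub
        (hYint w ⟨hw1, hwb⟩ (t - 1) (le_trans (Nat.sub_le t 1) htw))).indicator
      (((hTmeas w 0) measurableSet_Iio).inter ((hTmeas w 1) measurableSet_Ici))
  have hae : (fun ω => Y w (T w 1 ω) ω - Y w (T w 0 ω) ω)
      =ᵐ[P] fun ω => ∑ t ∈ Finset.Icc 1 w,
        if T w 0 ω < t ∧ t ≤ T w 1 ω then Y w t ω - Y w (t - 1) ω else 0 := by
    filter_upwards [hMono w ⟨hw1, hwb⟩] with ω hω
    have hfil : Finset.filter (fun t => T w 0 ω < t ∧ t ≤ T w 1 ω) (Finset.Icc 1 w)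
        = Finset.Ioc (T w 0 ω) (T w 1 ω) := by
      ext t
      simp only [Finset.mem_filter, Finset.mem_Icc, Finset.mem_Ioc]
      have := hTrange w ⟨hw1, hwb⟩ 1 le_rfl ω
      omega
    rw [← Finset.sum_filter, hfil, tele (fun t => Y w t ω) _ _ hω]
  rw [integral_congr_ae hae, integral_finset_sum _ hterm_int]
  apply Finset.sum_congr rfl
  intro t ht
  obtain ⟨ht1, htw⟩ := Finset.mem_Icc.mp ht
  have hAtm : MeasurableSet {ω | T w 0 ω < t ∧ t ≤ T w 1 ω} :=
    ((hTmeas w 0) measurableSet_Iio).inter ((hTmeas w 1) measurableSet_Ici)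
  have hind : (fun ω => if T w 0 ω < t ∧ t ≤ T w 1 ω then Y w t ω - Y w (t - 1) ω else 0)
      = Set.indicator {ω | T w 0 ω < t ∧ t ≤ T w 1 ω}
          (fun ω => Y w t ω - Y w (t - 1) ω) := by
    funext ω; simp [Set.indicator_apply]
  rw [hind, integral_indicator hAtm]
  rcases eq_or_ne (P {ω | T w 0 ω < t ∧ t ≤ T w 1 ω}) 0 with h0 | h0
  · rw [Measure.restrict_eq_zero.mpr h0, integral_zero_measure, h0]
    simp
  · have hpos : 0 < P {ω | T w 0 ω < t ∧ t ≤ T w 1 ω} := h0.bot_lt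
    have hc := (hWI w w t ht1 htw le_rfl hwb hpos hpos).1
    rw [cmean_eq] at hc
    have hne : (P {ω | T w 0 ω < t ∧ t ≤ T w 1 ω}).toReal ≠ 0 :=
      ENNReal.toReal_ne_zero.mpr ⟨h0, measure_ne_top P _⟩
    rw [inv_mul_eq_iff_eq_mul₀ hne] at hc
    rw [hc, mul_comm]
end

section
/- Under Independence, Monotonicity, Relevance, Wave ignorability, and absorbing treatment, the w̄ × w̄ lower-triangular matrix Π with entries Π_{w,t} = π_{w,t} for t ≤ w and Π_{w,t} = 0 for t > w is invertible (its diagonal entries all equal π_{1,1} > 0), and the vector λ = (λ_1, ..., λ_{w̄}) of incremental complier effects is the unique solution of the linear system ρ = Π λ, i.e., λ = Π⁻¹ ρ where ρ = (ρ_1, ..., ρ_{w̄}). -/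
/-!
By independence, each reduced form `ρ_w` equals `E[Y_w(T_w(1)) - Y_w(T_w(0))]`. Under
monotonicity this difference telescopes into the increments `Y_w(t) - Y_w(t-1)` over the
compliers at level `t`, `T_w(0) < t ≤ T_w(1)`, and wave ignorability evaluates the `t`-th term as
`π_{w,t} λ_t`; hence `ρ = Π λ`. Absorption gives `w ≤ T_w(z) ↔ 1 ≤ T_1(z)`, so every diagonal
complier set equals the first-wave one, whose probability is positive by relevance. A
lower-triangular matrix with nonzero diagonal is invertible.
-/

open MeasureTheory ProbabilityTheory Finset

lemma sum_Icc_ite_sub_eq_sub {G : Type*} [AddCommGroup G] (f : ℕ → G) {a b n : ℕ}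
    (hab : a ≤ b) (hbn : b ≤ n) :
    ∑ t ∈ Icc 1 n, (if a < t ∧ t ≤ b then f t - f (t - 1) else 0) = f b - f a := by
  have hfilter : (Icc 1 n).filter (fun t => a < t ∧ t ≤ b) =
      (Ico a b).map (addRightEmbedding 1) := by
    ext t; simp; omega
  rw [← sum_filter, hfilter, sum_map, sum_Ico_eq_sub _ hab]
  simp only [addRightEmbedding_apply, add_tsub_cancel_right, sum_range_sub]
  abel

lemma sum_fin_ite_le_eq_sum_Icc {M : Type*} [AddCommMonoid M] (g : ℕ → M) {n i : ℕ}
    (hi : i < n) :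
    ∑ j : Fin n, (if (j : ℕ) ≤ i then g (j + 1) else 0) = ∑ t ∈ Icc 1 (i + 1), g t := by
  have hfilter : (range n).filter (· ≤ i) = range (i + 1) := by ext; simp; omega
  rw [Fin.sum_univ_eq_sum_range (fun j => if j ≤ i then g (j + 1) else 0), ← sum_filter, hfilter,
    range_eq_Ico, sum_Ico_add', zero_add, Ico_add_one_right_eq_Icc]

lemma Matrix.isUnit_of_isLowerTriangular {K m : Type*} [Field K] [Fintype m] [DecidableEq m]
    [LinearOrder m] {M : Matrix m m K} (hM : M.IsLowerTriangular) (hdiag : ∀ i, M i i ≠ 0) :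
    IsUnit M := by
  rw [isUnit_iff_isUnit_det, det_of_isLowerTriangular M hM, isUnit_iff_ne_zero]
  exact prod_ne_zero_iff.mpr fun i _ => hdiag i

def IsAbsorbing (n : ℕ) (s : ℕ → ℕ) : Prop :=
  ∀ w, 1 ≤ w → w < n → (1 ≤ s w → s (w + 1) = s w + 1) ∧ (s w = 0 → s (w + 1) ≤ 1)

lemma IsAbsorbing.le_apply_iff {n : ℕ} {s : ℕ → ℕ} (hs : IsAbsorbing n s) {w : ℕ} (hw : 1 ≤ w)
    (hwn : w ≤ n) : w ≤ s w ↔ 1 ≤ s 1 := by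
  induction w, hw using Nat.le_induction with
  | base => rfl
  | succ w hw ih =>
    rw [← ih (by omega)]
    obtain ⟨hpos, hzero⟩ := hs w hw (by omega)
    rcases Nat.eq_zero_or_pos (s w) with h | h
    · have := hzero h; omega
    · have := hpos h; omega

section

variable {Ω : Type*} [MeasurableSpace Ω] {P : Measure Ω}

lemma cmean_eq_inv_mul_setIntegral (A : Set Ω) (X : Ω → ℝ) :
    cmean P A X = (P A).toReal⁻¹ * ∫ ω in A, X ω ∂P := by
  rw [cmean, ProbabilityTheory.cond, integral_smul_measure, ENNReal.toReal_inv, smul_eq_mul]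

lemma cmean_congr {A : Set Ω} (hA : MeasurableSet A) {f g : Ω → ℝ} (h : Set.EqOn f g A) :
    cmean P A f = cmean P A g := by
  rw [cmean_eq_inv_mul_setIntegral, cmean_eq_inv_mul_setIntegral, setIntegral_congr_fun hA h]

lemma setIntegral_eq_toReal_mul_of_cmean_eq [IsFiniteMeasure P] {A : Set Ω} {X : Ω → ℝ} {c : ℝ}
    (h : 0 < P A → cmean P A X = c) : ∫ ω in A, X ω ∂P = (P A).toReal * c := by
  rcases eq_zero_or_pos (P A) with hA | hA
  · rw [Measure.restrict_eq_zero.mpr hA, integral_zero_measure, hA, ENNReal.toReal_zero, zero_mul]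
  · have hA' : (P A).toReal ≠ 0 := (ENNReal.toReal_pos hA.ne' (measure_ne_top P A)).ne'
    rw [← h hA, cmean_eq_inv_mul_setIntegral, mul_inv_cancel_left₀ hA']

lemma setIntegral_eq_integral_mul_of_indepFun {X : Ω → ℝ} {Z : Ω → ℕ}
    (hX : Integrable X P) (hXZ : IndepFun X Z P) {c : ℕ} (hZs : MeasurableSet {ω | Z ω = c}) :
    ∫ ω in {ω | Z ω = c}, X ω ∂P = (∫ ω, X ω ∂P) * (P {ω | Z ω = c}).toReal := by
  have hind : IndepFun X ({ω | Z ω = c}.indicator fun _ => (1 : ℝ)) P :=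
    hXZ.comp measurable_id (measurable_of_countable (({c} : Set ℕ).indicator fun _ => (1 : ℝ)))
  have hmul : {ω | Z ω = c}.indicator X = X * {ω | Z ω = c}.indicator fun _ => (1 : ℝ) := by
    ext ω; by_cases h : Z ω = c <;> simp [h]
  rw [← integral_indicator hZs, hmul, hind.integral_mul_eq_mul_integral hX.aestronglyMeasurable
    ((measurable_const.indicator hZs).aestronglyMeasurable), integral_indicator_const _ hZs,
    smul_eq_mul, mul_one, measureReal_def]

lemma cmean_apply_eq_integral_of_indepFun [IsFiniteMeasure P] {F : ℕ → Ω → ℝ} {Z : Ω → ℕ}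
    (hZ : Measurable Z) {c : ℕ} (hF : Integrable (F c) P) (hFZ : IndepFun (F c) Z P)
    (hc : P {ω | Z ω = c} ≠ 0) :
    cmean P {ω | Z ω = c} (fun ω => F (Z ω) ω) = ∫ ω, F c ω ∂P := by
  have hZc : MeasurableSet {ω | Z ω = c} := hZ (measurableSet_singleton c)
  have hc' : (P {ω | Z ω = c}).toReal ≠ 0 := ENNReal.toReal_ne_zero.mpr ⟨hc, measure_ne_top _ _⟩
  rw [cmean_congr hZc fun ω (hω : Z ω = c) => by rw [hω], cmean_eq_inv_mul_setIntegral,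
    setIntegral_eq_integral_mul_of_indepFun hF hFZ hZc, mul_comm, mul_assoc,
    mul_inv_cancel₀ hc', mul_one]

lemma ProbabilityTheory.IndepFun.comp_pair_of_le_one {Y : ℕ → Ω → ℝ} {T : ℕ → Ω → ℕ} {Z : Ω → ℕ}
    (h : IndepFun (fun ω => ((fun t => Y t ω), T 1 ω, T 0 ω)) Z P) {g : (ℕ → ℝ) × ℕ → ℝ}
    (hg : Measurable g) {z : ℕ} (hz : z ≤ 1) :
    IndepFun (fun ω => g ((fun t => Y t ω), T z ω)) Z P := by
  interval_cases z
  · exact h.comp (hg.comp (measurable_fst.prodMk (measurable_snd.comp measurable_snd)))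
      measurable_id
  · exact h.comp (hg.comp (measurable_fst.prodMk (measurable_fst.comp measurable_snd)))
      measurable_id

lemma integrable_eval_of_le {f : ℕ → Ω → ℝ} {N : Ω → ℕ} {n : ℕ} (hN : Measurable N)
    (hNn : ∀ ω, N ω ≤ n) (hf : ∀ k ≤ n, Integrable (f k) P) :
    Integrable (fun ω => f (N ω) ω) P := by
  have hsum : (fun ω => f (N ω) ω) =
      fun ω => ∑ k ∈ range (n + 1), (N ⁻¹' {k}).indicator (f k) ω := by
    ext ω
    rw [sum_eq_single_of_mem (N ω) (mem_range.mpr (Nat.lt_succ_of_le (hNn ω)))]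
    · simp
    · intro k _ hk
      simp [Ne.symm hk]
  rw [hsum]
  exact integrable_finsetSum _ fun k hk =>
    (hf k (Nat.le_of_lt_succ (mem_range.mp hk))).indicator (hN (measurableSet_singleton k))

lemma measure_lt_one_le_pos_of_integral_lt [IsFiniteMeasure P] {A B : Ω → ℕ}
    (hA : Measurable A) (hB : Measurable B) (hA1 : ∀ ω, A ω ≤ 1) (hB1 : ∀ ω, B ω ≤ 1)
    (h : ∫ ω, (A ω : ℝ) ∂P < ∫ ω, (B ω : ℝ) ∂P) : 0 < P {ω | A ω < 1 ∧ 1 ≤ B ω} := by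
  rw [pos_iff_ne_zero]
  intro h0
  have hle : ∀ᵐ ω ∂P, (B ω : ℝ) ≤ A ω := by
    filter_upwards [measure_eq_zero_iff_ae_notMem.mp h0] with ω hω
    have := hB1 ω
    simp only [not_and_or, not_lt, not_le] at hω
    exact_mod_cast (by omega : B ω ≤ A ω)
  have hint : ∀ N : Ω → ℕ, Measurable N → (∀ ω, N ω ≤ 1) → Integrable (fun ω => (N ω : ℝ)) P :=
    fun N hN hN1 => integrable_eval_of_le hN hN1 fun _ _ => integrable_const _
  exact (integral_mono_ae (hint B hB hB1) (hint A hA hA1) hle).not_gt h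

lemma integral_sub_eq_sum_setIntegral [IsFiniteMeasure P] {Y : ℕ → Ω → ℝ} {T₀ T₁ : Ω → ℕ}
    {n : ℕ} (hT₀ : Measurable T₀) (hT₁ : Measurable T₁) (hT₀n : ∀ ω, T₀ ω ≤ n)
    (hT₁n : ∀ ω, T₁ ω ≤ n) (hY : ∀ t ≤ n, Integrable (Y t) P) (hmono : ∀ᵐ ω ∂P, T₀ ω ≤ T₁ ω) :
    ∫ ω, Y (T₁ ω) ω ∂P - ∫ ω, Y (T₀ ω) ω ∂P =
      ∑ t ∈ Icc 1 n, ∫ ω in {ω | T₀ ω < t ∧ t ≤ T₁ ω}, (Y t ω - Y (t - 1) ω) ∂P := by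
  have hC : ∀ t, MeasurableSet {ω | T₀ ω < t ∧ t ≤ T₁ ω} := fun t =>
    (hT₀ (measurableSet_Iio : MeasurableSet (Set.Iio t))).inter (hT₁ measurableSet_Ici)
  have hint : ∀ t ∈ Icc 1 n, Integrable
      ({ω | T₀ ω < t ∧ t ≤ T₁ ω}.indicator fun ω => Y t ω - Y (t - 1) ω) P := fun t ht =>
    ((hY t (mem_Icc.mp ht).2).sub (hY (t - 1) (by grind))).indicator (hC t)
  simp_rw [← integral_indicator (hC _)]
  rw [← integral_sub (integrable_eval_of_le hT₁ hT₁n hY) (integrable_eval_of_le hT₀ hT₀n hY),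
    ← integral_finsetSum _ hint]
  refine integral_congr_ae ?_
  filter_upwards [hmono] with ω hω
  simp only [Set.indicator_apply, Set.mem_ofPred_eq]
  exact (sum_Icc_ite_sub_eq_sub (Y · ω) hω (hT₁n ω)).symm

theorem cmean_sub_cmean_eq_sum_complier [IsFiniteMeasure P] {Z : Ω → ℕ} {T : ℕ → Ω → ℕ}
    {Y : ℕ → Ω → ℝ} {n : ℕ} {lam : ℕ → ℝ} (hZ : Measurable Z) (hZ₁ : P {ω | Z ω = 1} ≠ 0)
    (hZ₀ : P {ω | Z ω = 0} ≠ 0) (hT : ∀ z, Measurable (T z)) (hTn : ∀ z ≤ 1, ∀ ω, T z ω ≤ n)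
    (hY : ∀ t ≤ n, Integrable (Y t) P)
    (hind : IndepFun (fun ω => ((fun t => Y t ω), T 1 ω, T 0 ω)) Z P)
    (hmono : ∀ᵐ ω ∂P, T 0 ω ≤ T 1 ω)
    (hlam : ∀ t ∈ Icc 1 n, 0 < P {ω | T 0 ω < t ∧ t ≤ T 1 ω} →
      cmean P {ω | T 0 ω < t ∧ t ≤ T 1 ω} (fun ω => Y t ω - Y (t - 1) ω) = lam t) :
    cmean P {ω | Z ω = 1} (fun ω => Y (T (Z ω) ω) ω)
        - cmean P {ω | Z ω = 0} (fun ω => Y (T (Z ω) ω) ω) =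
      ∑ t ∈ Icc 1 n, (P {ω | T 0 ω < t ∧ t ≤ T 1 ω}).toReal * lam t := by
  have hobs : ∀ z ≤ 1, P {ω | Z ω = z} ≠ 0 →
      cmean P {ω | Z ω = z} (fun ω => Y (T (Z ω) ω) ω) = ∫ ω, Y (T z ω) ω ∂P :=
    fun z hz hPz => cmean_apply_eq_integral_of_indepFun (F := fun z ω => Y (T z ω) ω) hZ
      (integrable_eval_of_le (hT z) (hTn z hz) hY)
      (hind.comp_pair_of_le_one (g := fun p => p.1 p.2)
        (measurable_from_prod_countable_left fun t => measurable_pi_apply t) hz) hPz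
  rw [hobs 1 le_rfl hZ₁, hobs 0 zero_le_one hZ₀, integral_sub_eq_sum_setIntegral (hT 0) (hT 1)
    (hTn 0 zero_le_one) (hTn 1 le_rfl) hY hmono]
  exact sum_congr rfl fun t ht => setIntegral_eq_toReal_mul_of_cmean_eq (hlam t ht)

lemma measure_complier_pos_of_cmean_lt [IsFiniteMeasure P] {Z : Ω → ℕ} {T : ℕ → Ω → ℕ}
    {Y : ℕ → Ω → ℝ} (hZ : Measurable Z) (hZ₁ : P {ω | Z ω = 1} ≠ 0)
    (hZ₀ : P {ω | Z ω = 0} ≠ 0) (hT : ∀ z, Measurable (T z)) (hT1 : ∀ z ≤ 1, ∀ ω, T z ω ≤ 1)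
    (hind : IndepFun (fun ω => ((fun t => Y t ω), T 1 ω, T 0 ω)) Z P)
    (hrel : cmean P {ω | Z ω = 0} (fun ω => (T (Z ω) ω : ℝ))
      < cmean P {ω | Z ω = 1} (fun ω => (T (Z ω) ω : ℝ))) :
    0 < P {ω | T 0 ω < 1 ∧ 1 ≤ T 1 ω} := by
  have hfirst : ∀ z ≤ 1, P {ω | Z ω = z} ≠ 0 →
      cmean P {ω | Z ω = z} (fun ω => (T (Z ω) ω : ℝ)) = ∫ ω, (T z ω : ℝ) ∂P :=
    fun z hz hPz => cmean_apply_eq_integral_of_indepFun (F := fun z ω => (T z ω : ℝ)) hZ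
      (integrable_eval_of_le (hT z) (hT1 z hz) fun _ _ => integrable_const _)
      (hind.comp_pair_of_le_one (g := fun p => (p.2 : ℝ)) (by fun_prop) hz) hPz
  rw [hfirst 0 zero_le_one hZ₀, hfirst 1 le_rfl hZ₁] at hrel
  exact measure_lt_one_le_pos_of_integral_lt (hT 0) (hT 1) (hT1 0 zero_le_one) (hT1 1 le_rfl) hrel

lemma measure_setOf_eq_zero_ne_zero [IsProbabilityMeasure P] {Z : Ω → ℕ} (hZ : Measurable Z)
    (hZ1 : ∀ ω, Z ω ≤ 1) (h : P {ω | Z ω = 1} < 1) : P {ω | Z ω = 0} ≠ 0 := by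
  have hcompl : {ω | Z ω = 0} = {ω | Z ω = 1}ᶜ := by ext ω; have := hZ1 ω; simp; omega
  rw [hcompl, prob_compl_eq_one_sub (s := {ω | Z ω = 1}) (hZ (measurableSet_singleton 1))]
  exact (tsub_pos_of_lt h).ne'

end

theorem triangular_system_invertible_general
    {Ω : Type*} [MeasurableSpace Ω] (P : MeasureTheory.Measure Ω) [IsProbabilityMeasure P]
    (Z : Ω → ℕ) (hZmeas : Measurable Z) (hZbin : ∀ ω, Z ω ≤ 1)
    (hZpos : 0 < P {ω | Z ω = 1}) (hZlt : P {ω | Z ω = 1} < 1)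
    (wbar : ℕ) (hwbar : 1 ≤ wbar)
    (T : ℕ → ℕ → Ω → ℕ) (hTmeas : ∀ w z, Measurable (T w z))
    (hTrange : ∀ w ∈ Set.Icc 1 wbar, ∀ z ≤ 1, ∀ ω, T w z ω ≤ w)
    (Y : ℕ → ℕ → Ω → ℝ)
    (hYint : ∀ w ∈ Set.Icc 1 wbar, ∀ t ≤ w, MeasureTheory.Integrable (Y w t) P)
    (hAbs : ∀ z ≤ 1, ∀ w, 1 ≤ w → w < wbar → ∀ ω,
      (1 ≤ T w z ω → T (w + 1) z ω = T w z ω + 1) ∧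
      (T w z ω = 0 → T (w + 1) z ω ≤ 1))
    (hIndep : ∀ w ∈ Set.Icc 1 wbar,
      IndepFun (fun ω => ((fun t : ℕ => Y w t ω), T w 1 ω, T w 0 ω)) Z P)
    (hMono : ∀ w ∈ Set.Icc 1 wbar, ∀ᵐ ω ∂P, T w 0 ω ≤ T w 1 ω)
    (hRel : cmean P {ω | Z ω = 0} (fun ω => (T 1 (Z ω) ω : ℝ))
          < cmean P {ω | Z ω = 1} (fun ω => (T 1 (Z ω) ω : ℝ)))
    (lam : ℕ → ℝ)
    (hWI : ∀ v w t, 1 ≤ t → t ≤ v → v ≤ w → w ≤ wbar →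
      0 < P {ω | T w 0 ω < t ∧ t ≤ T w 1 ω} →
      0 < P {ω | T v 0 ω < t ∧ t ≤ T v 1 ω} →
      cmean P {ω | T w 0 ω < t ∧ t ≤ T w 1 ω} (fun ω => Y w t ω - Y w (t - 1) ω) = lam t ∧
      cmean P {ω | T v 0 ω < t ∧ t ≤ T v 1 ω} (fun ω => Y v t ω - Y v (t - 1) ω) = lam t)
    (M : Matrix (Fin wbar) (Fin wbar) ℝ)
    (hM : ∀ i j : Fin wbar, M i j =
      if (j : ℕ) ≤ (i : ℕ)
      then (P {ω | T ((i : ℕ) + 1) 0 ω < (j : ℕ) + 1 ∧ (j : ℕ) + 1 ≤ T ((i : ℕ) + 1) 1 ω}).toReal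
      else 0)
    (rho : Fin wbar → ℝ)
    (hrho : ∀ i : Fin wbar, rho i =
      cmean P {ω | Z ω = 1} (fun ω => Y ((i : ℕ) + 1) (T ((i : ℕ) + 1) (Z ω) ω) ω)
        - cmean P {ω | Z ω = 0} (fun ω => Y ((i : ℕ) + 1) (T ((i : ℕ) + 1) (Z ω) ω) ω))
    (lv : Fin wbar → ℝ) (hlv : ∀ i : Fin wbar, lv i = lam ((i : ℕ) + 1)) :
    (∀ i : Fin wbar, M i i = (P {ω | T 1 0 ω < 1 ∧ 1 ≤ T 1 1 ω}).toReal) ∧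
    0 < P {ω | T 1 0 ω < 1 ∧ 1 ≤ T 1 1 ω} ∧
    IsUnit M ∧
    M.mulVec lv = rho ∧
    lv = M⁻¹.mulVec rho ∧
    (∀ x : Fin wbar → ℝ, M.mulVec x = rho → x = lv) := by
  have hw₁ : 1 ∈ Set.Icc 1 wbar := ⟨le_rfl, hwbar⟩
  have hZ₀ : P {ω | Z ω = 0} ≠ 0 := measure_setOf_eq_zero_ne_zero hZmeas hZbin hZlt
  have hpos : 0 < P {ω | T 1 0 ω < 1 ∧ 1 ≤ T 1 1 ω} :=
    measure_complier_pos_of_cmean_lt hZmeas hZpos.ne' hZ₀ (hTmeas 1) (hTrange 1 hw₁) (hIndep 1 hw₁)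
      hRel
  have habs : ∀ z ≤ 1, ∀ ω, IsAbsorbing wbar (T · z ω) :=
    fun z hz ω w hw hwn => hAbs z hz w hw hwn ω
  have hdiag : ∀ i : Fin wbar, M i i = (P {ω | T 1 0 ω < 1 ∧ 1 ≤ T 1 1 ω}).toReal := by
    intro i
    rw [hM, if_pos le_rfl]
    congr 2; ext ω
    simp only [Set.mem_ofPred_eq, ← not_le, (habs 0 zero_le_one ω).le_apply_iff le_add_self i.isLt,
      (habs 1 le_rfl ω).le_apply_iff le_add_self i.isLt]
  have hsol : M.mulVec lv = rho := by
    ext i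
    have hi : (i : ℕ) + 1 ∈ Set.Icc 1 wbar := ⟨le_add_self, i.isLt⟩
    rw [hrho i, cmean_sub_cmean_eq_sum_complier hZmeas hZpos.ne' hZ₀ (hTmeas _) (hTrange _ hi)
      (hYint _ hi) (hIndep _ hi) (hMono _ hi)
      fun t ht hpos => (hWI _ _ t (mem_Icc.mp ht).1 (mem_Icc.mp ht).2 le_rfl hi.2 hpos hpos).1,
      ← sum_fin_ite_le_eq_sum_Icc _ i.isLt]
    simp only [Matrix.mulVec, dotProduct, hM, hlv, ite_mul, zero_mul]
  have hunit : IsUnit M := by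
    refine Matrix.isUnit_of_isLowerTriangular (fun i j hij => ?_) fun i => ?_
    · have hij : i < j := OrderDual.toDual_lt_toDual.mp hij
      rw [hM, if_neg (by omega)]
    · rw [hdiag]
      exact (ENNReal.toReal_pos hpos.ne' (measure_ne_top _ _)).ne'
  have := hunit.invertible
  exact ⟨hdiag, hpos, hunit, hsol, (Matrix.inv_mulVec_eq_vec hsol.symm).symm,
    fun x hx => Matrix.mulVec_injective_iff_isUnit.mpr hunit (hx.trans hsol.symm)⟩

theorem triangular_system_invertible
    {Ω : Type*} [MeasurableSpace Ω] (P : MeasureTheory.Measure Ω) [IsProbabilityMeasure P]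
    (Z : Ω → ℕ) (hZmeas : Measurable Z) (hZbin : ∀ ω, Z ω ≤ 1)
    (hZpos : 0 < P {ω | Z ω = 1}) (hZlt : P {ω | Z ω = 1} < 1)
    (wbar : ℕ) (hwbar : 1 ≤ wbar)
    (T : ℕ → ℕ → Ω → ℕ) (hTmeas : ∀ w z, Measurable (T w z))
    (hTrange : ∀ w ∈ Set.Icc 1 wbar, ∀ z ≤ 1, ∀ ω, T w z ω ≤ w)
    (Y : ℕ → ℕ → Ω → ℝ) (hYmeas : ∀ w t, Measurable (Y w t))
    (hYint : ∀ w ∈ Set.Icc 1 wbar, ∀ t ≤ w, MeasureTheory.Integrable (Y w t) P)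
    (hAbs : ∀ z ≤ 1, ∀ w, 1 ≤ w → w < wbar → ∀ ω,
      (1 ≤ T w z ω → T (w + 1) z ω = T w z ω + 1) ∧
      (T w z ω = 0 → T (w + 1) z ω ≤ 1))
    (hIndep : ∀ w ∈ Set.Icc 1 wbar,
      IndepFun (fun ω => ((fun t : ℕ => Y w t ω), T w 1 ω, T w 0 ω)) Z P)
    (hMono : ∀ w ∈ Set.Icc 1 wbar, ∀ᵐ ω ∂P, T w 0 ω ≤ T w 1 ω)
    (hRel : cmean P {ω | Z ω = 0} (fun ω => (T 1 (Z ω) ω : ℝ))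
          < cmean P {ω | Z ω = 1} (fun ω => (T 1 (Z ω) ω : ℝ)))
    (lam : ℕ → ℝ)
    (hWI : ∀ v w t, 1 ≤ t → t ≤ v → v ≤ w → w ≤ wbar →
      0 < P {ω | T w 0 ω < t ∧ t ≤ T w 1 ω} →
      0 < P {ω | T v 0 ω < t ∧ t ≤ T v 1 ω} →
      cmean P {ω | T w 0 ω < t ∧ t ≤ T w 1 ω} (fun ω => Y w t ω - Y w (t - 1) ω) = lam t ∧
      cmean P {ω | T v 0 ω < t ∧ t ≤ T v 1 ω} (fun ω => Y v t ω - Y v (t - 1) ω) = lam t)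
    (M : Matrix (Fin wbar) (Fin wbar) ℝ)
    (hM : ∀ i j : Fin wbar, M i j =
      if (j : ℕ) ≤ (i : ℕ)
      then (P {ω | T ((i : ℕ) + 1) 0 ω < (j : ℕ) + 1 ∧ (j : ℕ) + 1 ≤ T ((i : ℕ) + 1) 1 ω}).toReal
      else 0)
    (rho : Fin wbar → ℝ)
    (hrho : ∀ i : Fin wbar, rho i =
      cmean P {ω | Z ω = 1} (fun ω => Y ((i : ℕ) + 1) (T ((i : ℕ) + 1) (Z ω) ω) ω)
        - cmean P {ω | Z ω = 0} (fun ω => Y ((i : ℕ) + 1) (T ((i : ℕ) + 1) (Z ω) ω) ω))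
    (lv : Fin wbar → ℝ) (hlv : ∀ i : Fin wbar, lv i = lam ((i : ℕ) + 1)) :
    (∀ i : Fin wbar, M i i = (P {ω | T 1 0 ω < 1 ∧ 1 ≤ T 1 1 ω}).toReal) ∧
    0 < P {ω | T 1 0 ω < 1 ∧ 1 ≤ T 1 1 ω} ∧
    IsUnit M ∧
    M.mulVec lv = rho ∧
    lv = M⁻¹.mulVec rho ∧
    (∀ x : Fin wbar → ℝ, M.mulVec x = rho → x = lv) :=
  triangular_system_invertible_general P Z hZmeas hZbin hZpos hZlt wbar hwbar T hTmeas hTrange Y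
    hYint hAbs hIndep hMono hRel lam hWI M hM rho hrho lv hlv
end
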